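/- Let Λ : ℝ × (0,∞) → (0,∞) be a positive continuous function such that ∫_ℝ Λ(ξ,ζ) exp(−cosh(ξ)/ζ) dξ < ∞ for every ζ > 0, let h_Λ(ξ,ζ) be defined for each ζ > 0 by ∫_{−∞}^{h_Λ(ξ,ζ)} Λ(x,ζ) exp(−cosh(x)/ζ) dx = ∫_ξ^{∞} Λ(x,ζ) exp(−cosh(x)/ζ) dx, and define 𝒯_Λ : C([0,t];ℝ) → C([0,t];ℝ) by 𝒯_Λ(φ)(s) := T_{φ_t − h_Λ(φ_t, Z_t(φ))}(φ)(s), 0 ≤ s ≤ t. Then 𝒯_Λ is an involution: 𝒯_Λ ∘ 𝒯_Λ = Id on C([0,t];ℝ). -/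

import Mathlib

open MeasureTheory ProbabilityTheory Set

/-- `A_s(φ) = ∫_0^s e^{2 φ_u} du`. -/
noncomputable def pA (φ : ℝ → ℝ) (s : ℝ) : ℝ := ∫ u in (0:ℝ)..s, Real.exp (2 * φ u)

/-- `Z_s(φ) = e^{-φ_s} A_s(φ)`. -/
noncomputable def pZ (φ : ℝ → ℝ) (s : ℝ) : ℝ := Real.exp (-(φ s)) * pA φ s

/-- The anticipative transformation `T_z` on paths over `[0,t]`:
`T_z(φ)(s) = φ_s - log(1 + (A_s(φ)/A_t(φ)) (e^z - 1))`. -/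
noncomputable def pT (t z : ℝ) (φ : ℝ → ℝ) (s : ℝ) : ℝ :=
  φ s - Real.log (1 + (pA φ s / pA φ t) * (Real.exp z - 1))

/-!
Since `D = 1 + (A/A_t)(e^z - 1)` is affine in `A` and `(A/D)' = e^{2φ}/D²`, the transformation
acts on `A` by a Möbius map: `A_s(T_z φ) = A_s / D_s`. Hence `T_z` shifts `φ_t` by `-z`,
leaves `Z_t` unchanged, and `T_w ∘ T_z = T_{z+w}` on `[0,t]`. As `Z_t` is invariant, the
second application of `𝒯_Λ` uses the same `ζ`, and `h_Λ(·, ζ)` is an involution because it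
matches the left tail of a positive finite mass with its right tail. So the second shift is
`-z`, and `𝒯_Λ ∘ 𝒯_Λ = T_0 = id`.
-/

lemma injective_integral_Iic_of_pos {g : ℝ → ℝ} (hg : ∀ x, 0 < g x) (hgi : Integrable g) :
    Function.Injective fun a => ∫ x in Iic a, g x := by
  refine StrictMono.injective fun a b hab => sub_pos.1 ?_
  rw [intervalIntegral.integral_Iic_sub_Iic hgi.integrableOn hgi.integrableOn]
  exact intervalIntegral.intervalIntegral_pos_of_pos_on hgi.intervalIntegrable
    (fun x _ => hg x) hab

lemma integral_Iic_add_integral_Ici {g : ℝ → ℝ} (hgi : Integrable g) (a : ℝ) :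
    (∫ x in Iic a, g x) + ∫ x in Ici a, g x = ∫ x, g x := by
  rw [integral_Ici_eq_integral_Ioi]
  exact intervalIntegral.integral_Iic_add_Ioi hgi.integrableOn hgi.integrableOn

lemma involutive_of_integral_Iic_eq_integral_Ici {g : ℝ → ℝ} (hg : ∀ x, 0 < g x)
    (hgi : Integrable g) {h : ℝ → ℝ}
    (hh : ∀ ξ, (∫ x in Iic (h ξ), g x) = ∫ x in Ici ξ, g x) : Function.Involutive h := by
  intro ξ
  apply injective_integral_Iic_of_pos hg hgi
  have h₁ := integral_Iic_add_integral_Ici hgi (h ξ)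
  have h₂ := integral_Iic_add_integral_Ici hgi ξ
  simp only [hh] at h₁ h₂ ⊢
  linarith

lemma HasDerivAt.div_one_add_mul {f : ℝ → ℝ} {f' k u : ℝ} (hf : HasDerivAt f f' u)
    (hu : 1 + f u * k ≠ 0) :
    HasDerivAt (fun v => f v / (1 + f v * k)) (f' / (1 + f u * k) ^ 2) u := by
  refine (hf.fun_div ((hf.mul_const k).const_add 1) hu).congr_deriv ?_
  ring

lemma one_add_mul_exp_sub_one_pos {r : ℝ} (hr₀ : 0 ≤ r) (hr₁ : r ≤ 1) (z : ℝ) :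
    0 < 1 + r * (Real.exp z - 1) := by
  nlinarith [Real.exp_pos z, mul_nonneg hr₀ (Real.exp_pos z).le]

lemma pA_zero (φ : ℝ → ℝ) : pA φ 0 = 0 := intervalIntegral.integral_same

lemma pT_zero (t : ℝ) (φ : ℝ → ℝ) : pT t 0 φ = φ := by
  funext s
  simp [pT]

section PathTransformation

variable {t : ℝ} {φ : ℝ → ℝ}

lemma continuousOn_exp_two_mul (hφ : ContinuousOn φ (Icc 0 t)) :
    ContinuousOn (fun u => Real.exp (2 * φ u)) (Icc 0 t) := by
  fun_prop

lemma intervalIntegrable_exp_two_mul (hφ : ContinuousOn φ (Icc 0 t)) {a b : ℝ}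
    (ha : a ∈ Icc 0 t) (hb : b ∈ Icc 0 t) :
    IntervalIntegrable (fun u => Real.exp (2 * φ u)) volume a b :=
  ((continuousOn_exp_two_mul hφ).mono (uIcc_subset_Icc ha hb)).intervalIntegrable

lemma pA_nonneg {s : ℝ} (hs : 0 ≤ s) : 0 ≤ pA φ s :=
  intervalIntegral.integral_nonneg hs fun _ _ => (Real.exp_pos _).le

lemma pA_pos (ht : 0 < t) (hφ : ContinuousOn φ (Icc 0 t)) : 0 < pA φ t :=
  intervalIntegral.intervalIntegral_pos_of_pos_on
    (intervalIntegrable_exp_two_mul hφ (left_mem_Icc.2 ht.le) (right_mem_Icc.2 ht.le))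
    (fun _ _ => Real.exp_pos _) ht

lemma pA_le (hφ : ContinuousOn φ (Icc 0 t)) {s : ℝ} (hs : s ∈ Icc 0 t) : pA φ s ≤ pA φ t :=
  intervalIntegral.integral_mono_interval le_rfl hs.1 hs.2
    (Filter.Eventually.of_forall fun _ => (Real.exp_pos _).le)
    (intervalIntegrable_exp_two_mul hφ (left_mem_Icc.2 (hs.1.trans hs.2))
      (right_mem_Icc.2 (hs.1.trans hs.2)))

lemma continuousOn_pA (ht : 0 ≤ t) (hφ : ContinuousOn φ (Icc 0 t)) :
    ContinuousOn (pA φ) (Icc 0 t) := by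
  rw [← uIcc_of_le ht]
  exact intervalIntegral.continuousOn_primitive_interval'
    (intervalIntegrable_exp_two_mul hφ (left_mem_Icc.2 ht) (right_mem_Icc.2 ht))
    left_mem_uIcc

lemma hasDerivAt_pA (hφ : ContinuousOn φ (Icc 0 t)) {u : ℝ} (hu : u ∈ Ioo 0 t) :
    HasDerivAt (pA φ) (Real.exp (2 * φ u)) u :=
  intervalIntegral.integral_hasDerivAt_right
    (intervalIntegrable_exp_two_mul hφ (left_mem_Icc.2 (hu.1.trans hu.2).le)
      (Ioo_subset_Icc_self hu))
    (((continuousOn_exp_two_mul hφ).mono Ioo_subset_Icc_self).stronglyMeasurableAtFilter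
      isOpen_Ioo u hu)
    ((continuousOn_exp_two_mul hφ).continuousAt (Icc_mem_nhds hu.1 hu.2))

lemma pT_apply_right (hA : pA φ t ≠ 0) (z : ℝ) : pT t z φ t = φ t - z := by
  simp [pT, div_self hA]

lemma pT_denom_pos (ht : 0 < t) (hφ : ContinuousOn φ (Icc 0 t)) (z : ℝ) {s : ℝ}
    (hs : s ∈ Icc 0 t) : 0 < 1 + pA φ s / pA φ t * (Real.exp z - 1) :=
  one_add_mul_exp_sub_one_pos (div_nonneg (pA_nonneg hs.1) (pA_pos ht hφ).le)
    ((div_le_one (pA_pos ht hφ)).2 (pA_le hφ hs)) z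

lemma exp_two_mul_pT (z : ℝ) {u : ℝ} (hu : 0 < 1 + pA φ u / pA φ t * (Real.exp z - 1)) :
    Real.exp (2 * pT t z φ u) =
      Real.exp (2 * φ u) / (1 + pA φ u / pA φ t * (Real.exp z - 1)) ^ 2 := by
  rw [pT, mul_sub, Real.exp_sub, ← Real.log_rpow hu, Real.exp_log (by positivity)]
  norm_cast

lemma pA_pT (ht : 0 < t) (hφ : ContinuousOn φ (Icc 0 t)) (z : ℝ) {s : ℝ}
    (hs : s ∈ Icc 0 t) :
    pA (pT t z φ) s = pA φ s / (1 + pA φ s / pA φ t * (Real.exp z - 1)) := by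
  set k := (Real.exp z - 1) / pA φ t
  have hD : ∀ u, 1 + pA φ u / pA φ t * (Real.exp z - 1) = 1 + pA φ u * k := fun u => by ring
  have hsub : Icc 0 s ⊆ Icc 0 t := Icc_subset_Icc le_rfl hs.2
  have hpos : ∀ u ∈ Icc 0 s, 0 < 1 + pA φ u * k := fun u hu =>
    hD u ▸ pT_denom_pos ht hφ z (hsub hu)
  have hDcont : ContinuousOn (fun u => 1 + pA φ u * k) (Icc 0 s) :=
    continuousOn_const.add (((continuousOn_pA ht.le hφ).mono hsub).mul continuousOn_const)
  calc pA (pT t z φ) s = ∫ u in 0..s, Real.exp (2 * φ u) / (1 + pA φ u * k) ^ 2 := by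
        refine intervalIntegral.integral_congr fun u hu => ?_
        rw [uIcc_of_le hs.1] at hu
        rw [exp_two_mul_pT z (hD u ▸ hpos u hu), hD]
    _ = pA φ s / (1 + pA φ s * k) - pA φ 0 / (1 + pA φ 0 * k) := by
        refine intervalIntegral.integral_eq_sub_of_hasDeriv_right_of_le hs.1
          (((continuousOn_pA ht.le hφ).mono hsub).div hDcont fun u hu => (hpos u hu).ne')
          (fun u hu => ?_) ?_
        · exact ((hasDerivAt_pA hφ ⟨hu.1, hu.2.trans_le hs.2⟩).div_one_add_mul
            (hpos u (Ioo_subset_Icc_self hu)).ne').hasDerivWithinAt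
        · refine ContinuousOn.intervalIntegrable ?_
          rw [uIcc_of_le hs.1]
          exact ((continuousOn_exp_two_mul hφ).mono hsub).div (hDcont.pow 2)
            fun u hu => (pow_pos (hpos u hu) 2).ne'
    _ = _ := by rw [pA_zero, zero_div, sub_zero, hD]

lemma pA_pT_right (ht : 0 < t) (hφ : ContinuousOn φ (Icc 0 t)) (z : ℝ) :
    pA (pT t z φ) t = pA φ t * Real.exp (-z) := by
  rw [pA_pT ht hφ z (right_mem_Icc.2 ht.le), div_self (pA_pos ht hφ).ne', Real.exp_neg]
  ring

lemma pZ_pT_right (ht : 0 < t) (hφ : ContinuousOn φ (Icc 0 t)) (z : ℝ) :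
    pZ (pT t z φ) t = pZ φ t := by
  rw [pZ, pZ, pT_apply_right (pA_pos ht hφ).ne', pA_pT_right ht hφ, neg_sub, Real.exp_sub,
    Real.exp_neg, Real.exp_neg]
  field_simp

lemma pT_pT (ht : 0 < t) (hφ : ContinuousOn φ (Icc 0 t)) (z w : ℝ) {s : ℝ}
    (hs : s ∈ Icc 0 t) : pT t w (pT t z φ) s = pT t (z + w) φ s := by
  have hz := pT_denom_pos ht hφ z hs
  have hzw := pT_denom_pos ht hφ (z + w) hs
  have hA := (pA_pos ht hφ).ne'
  have hmul : 1 + pA φ s / (1 + pA φ s / pA φ t * (Real.exp z - 1)) /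
        (pA φ t * Real.exp (-z)) * (Real.exp w - 1) =
      (1 + pA φ s / pA φ t * (Real.exp (z + w) - 1)) /
        (1 + pA φ s / pA φ t * (Real.exp z - 1)) := by
    have hz' : pA φ t + pA φ s * (Real.exp z - 1) ≠ 0 := by
      rw [show pA φ t + pA φ s * (Real.exp z - 1) =
        pA φ t * (1 + pA φ s / pA φ t * (Real.exp z - 1)) by field_simp]
      exact mul_ne_zero hA hz.ne'
    rw [Real.exp_add, Real.exp_neg]
    field_simp
    ring
  rw [pT, pA_pT ht hφ z hs, pA_pT_right ht hφ, hmul, Real.log_div hzw.ne' hz.ne', pT, pT]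
  ring

end PathTransformation

theorem TLambda_involution_general
    (t : ℝ) (ht : 0 < t) (Λ : ℝ × ℝ → ℝ)
    (hΛpos : ∀ ξ ζ : ℝ, 0 < ζ → 0 < Λ (ξ, ζ))
    (hΛint : ∀ ζ : ℝ, 0 < ζ →
      Integrable (fun x : ℝ => Λ (x, ζ) * Real.exp (-Real.cosh x / ζ)))
    (hΛfun : ℝ × ℝ → ℝ)
    (hdef : ∀ ξ ζ : ℝ, 0 < ζ →
      (∫ x in Iic (hΛfun (ξ, ζ)), Λ (x, ζ) * Real.exp (-Real.cosh x / ζ)) =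
        ∫ x in Ici ξ, Λ (x, ζ) * Real.exp (-Real.cosh x / ζ))
    (TΛ : (ℝ → ℝ) → (ℝ → ℝ))
    (hTΛ : ∀ φ : ℝ → ℝ, TΛ φ = pT t (φ t - hΛfun (φ t, pZ φ t)) φ) :
    ∀ φ : ℝ → ℝ, ContinuousOn φ (Icc 0 t) →
      ∀ s ∈ Icc (0:ℝ) t, TΛ (TΛ φ) s = φ s := by
  intro φ hφ s hs
  have hζ : 0 < pZ φ t := mul_pos (Real.exp_pos _) (pA_pos ht hφ)
  have hh : hΛfun (hΛfun (φ t, pZ φ t), pZ φ t) = φ t :=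
    involutive_of_integral_Iic_eq_integral_Ici (h := fun ξ => hΛfun (ξ, pZ φ t))
      (fun x => mul_pos (hΛpos x _ hζ) (Real.exp_pos _)) (hΛint _ hζ)
      (fun ξ => hdef ξ _ hζ) (φ t)
  have hsecond : TΛ (TΛ φ) = pT t (-(φ t - hΛfun (φ t, pZ φ t))) (TΛ φ) := by
    rw [hTΛ (TΛ φ), hTΛ φ, pT_apply_right (pA_pos ht hφ).ne', pZ_pT_right ht hφ, sub_sub_cancel,
      hh, neg_sub]
  rw [hsecond, hTΛ φ, pT_pT ht hφ _ _ hs, add_neg_cancel, pT_zero]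

/-- Let `Λ` be positive continuous with `∫_ℝ Λ(ξ,ζ) e^{-cosh ξ/ζ} dξ < ∞` for all `ζ > 0`,
let `h_Λ` satisfy the defining equation, and let
`𝒯_Λ(φ)(s) = T_{φ_t - h_Λ(φ_t, Z_t(φ))}(φ)(s)`.  Then `𝒯_Λ` is an involution on
`C([0,t];ℝ)`: `𝒯_Λ ∘ 𝒯_Λ = Id`. -/
theorem TLambda_involution
    (t : ℝ) (ht : 0 < t) (Λ : ℝ × ℝ → ℝ)
    (hΛpos : ∀ ξ ζ : ℝ, 0 < ζ → 0 < Λ (ξ, ζ))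
    (hΛcont : ContinuousOn Λ (univ ×ˢ Ioi (0:ℝ)))
    (hΛint : ∀ ζ : ℝ, 0 < ζ →
      Integrable (fun x : ℝ => Λ (x, ζ) * Real.exp (-Real.cosh x / ζ)))
    (hΛfun : ℝ × ℝ → ℝ)
    (hdef : ∀ ξ ζ : ℝ, 0 < ζ →
      (∫ x in Iic (hΛfun (ξ, ζ)), Λ (x, ζ) * Real.exp (-Real.cosh x / ζ)) =
        ∫ x in Ici ξ, Λ (x, ζ) * Real.exp (-Real.cosh x / ζ))
    (TΛ : (ℝ → ℝ) → (ℝ → ℝ))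
    (hTΛ : ∀ φ : ℝ → ℝ, TΛ φ = pT t (φ t - hΛfun (φ t, pZ φ t)) φ) :
    ∀ φ : ℝ → ℝ, ContinuousOn φ (Icc 0 t) →
      ∀ s ∈ Icc (0:ℝ) t, TΛ (TΛ φ) s = φ s :=
  TLambda_involution_general t ht Λ hΛpos hΛint hΛfun hdef TΛ hTΛ
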